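/- Under the same hypotheses on $\ell$, the function $g_\ell(\lambda)=\inf_{k}k^{-d}\Gamma_\ell(\lambda,Q_k)$ satisfies for every $\lambda>0$ and every $\delta>0$ with $\ell_-(\delta)>0$ the upper bound $g_\ell(\lambda)\le \delta^{-d}\,\ell_-(\delta)\,\varphi(\lambda/\ell_-(\delta))$, where $\varphi(t)=(1+t)^2/4$ for $t\ge1$, $\varphi(t)=t$ for $0\le t<1$; if $\ell_-(\delta)=+\infty$ the bound reads $g_\ell(\lambda)\le\delta^{-d}\lambda$. In particular $g_\ell$ is convex, continuous, nonnegative, and vanishes on $(-\infty,0]$. -/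

import Mathlib

open scoped ENNReal BigOperators Classical
open Filter MeasureTheory Set
open scoped Topology

noncomputable section

/-- The interaction energy of a finite point configuration. -/
def xi {d : ℕ} (ℓ : ℝ → ℝ≥0∞) (S : Finset (EuclideanSpace ℝ (Fin d))) : ℝ≥0∞ :=
  ∑ x ∈ S, ∑ y ∈ S, if x ≠ y then ℓ (dist x y) else 0

/-- `Γ_ℓ(λ, B) = sup {λ #S - ξ_ℓ(S) : S ⊆ B finite}`. -/
def Gam {d : ℕ} (ℓ : ℝ → ℝ≥0∞) (lam : ℝ) (B : Set (EuclideanSpace ℝ (Fin d))) : ℝ :=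
  sSup {x : ℝ | ∃ S : Finset (EuclideanSpace ℝ (Fin d)),
    ↑S ⊆ B ∧ xi ℓ S ≠ ⊤ ∧ x = lam * S.card - (xi ℓ S).toReal}

/-- The half-open hypercube `Q_k = [-k/2, k/2)^d`. -/
def Qcube (d k : ℕ) : Set (EuclideanSpace ℝ (Fin d)) :=
  {x | ∀ i, -((k : ℝ)/2) ≤ x i ∧ x i < (k : ℝ)/2}

/-- The thermodynamic limit function `g_ℓ(λ) = inf_{k ≥ 1} Γ_ℓ(λ, Q_k)/k^d`. -/
def gl (d : ℕ) (ℓ : ℝ → ℝ≥0∞) (lam : ℝ) : ℝ :=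
  ⨅ k : ℕ+, Gam ℓ lam (Qcube d k) / (k : ℝ) ^ d

/-- The Epstein zeta function of the cubic lattice `ℤ^d`. -/
def LamZ (d : ℕ) (ℓ : ℝ → ℝ≥0∞) (r : ℝ) : ℝ≥0∞ :=
  ∑' z : {z : Fin d → ℤ // z ≠ 0},
    ℓ (r * ‖(WithLp.equiv 2 (Fin d → ℝ)).symm (fun i => (((z : Fin d → ℤ)) i : ℝ))‖)

/-- `ℓ₋(δ) = inf {ℓ(|x-y|) : x, y ∈ [0,δ]^d}`. -/
def ellMinus (d : ℕ) (ℓ : ℝ → ℝ≥0∞) (δ : ℝ) : ℝ≥0∞ :=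
  ⨅ x ∈ {x : EuclideanSpace ℝ (Fin d) | ∀ i, x i ∈ Set.Icc 0 δ},
    ⨅ y ∈ {y : EuclideanSpace ℝ (Fin d) | ∀ i, y i ∈ Set.Icc 0 δ}, ℓ (dist x y)

/-- `φ(t) = (1+t)²/4` for `t ≥ 1`, `t` for `0 ≤ t < 1`, `0` for `t < 0`. -/
def phi (t : ℝ) : ℝ := if t < 0 then 0 else if t < 1 then t else (1 + t) ^ 2 / 4

namespace GlAux

variable {d : ℕ}

abbrev E (d : ℕ) := EuclideanSpace ℝ (Fin d)

def GamSet (ℓ : ℝ → ℝ≥0∞) (lam : ℝ) (B : Set (E d)) : Set ℝ :=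
  {x : ℝ | ∃ S : Finset (E d), ↑S ⊆ B ∧ xi ℓ S ≠ ⊤ ∧ x = lam * S.card - (xi ℓ S).toReal}

lemma Gam_def (ℓ : ℝ → ℝ≥0∞) (lam : ℝ) (B : Set (E d)) :
    Gam ℓ lam B = sSup (GamSet ℓ lam B) := rfl

lemma zero_mem_GamSet (ℓ : ℝ → ℝ≥0∞) (lam : ℝ) (B : Set (E d)) :
    (0:ℝ) ∈ GamSet ℓ lam B := ⟨∅, by simp, by simp [xi], by simp [xi]⟩

lemma Gam_nonneg (ℓ : ℝ → ℝ≥0∞) (lam : ℝ) (B : Set (E d)) : 0 ≤ Gam ℓ lam B := by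
  by_cases h : BddAbove (GamSet ℓ lam B)
  · exact le_csSup h (zero_mem_GamSet ℓ lam B)
  · rw [Gam_def, Real.sSup_of_not_bddAbove h]

lemma xi_image_sub (ℓ : ℝ → ℝ≥0∞) (t : E d) (S : Finset (E d)) :
    xi ℓ (S.image fun x => x - t) = xi ℓ S := by
  have hinj : ∀ x ∈ S, ∀ y ∈ S, x - t = y - t → x = y := fun x _ y _ h => by
    simpa [sub_left_inj] using h
  unfold xi
  rw [Finset.sum_image hinj]
  refine Finset.sum_congr rfl fun x hx => ?_
  rw [Finset.sum_image hinj]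
  refine Finset.sum_congr rfl fun y hy => ?_
  simp [sub_left_inj, dist_sub_right]

lemma xi_fiber (ℓ : ℝ → ℝ≥0∞) {γ : Type} [DecidableEq γ] (g : E d → γ) (S : Finset (E d)) :
    ∑ v ∈ S.image g, xi ℓ (S.filter fun x => g x = v) ≤ xi ℓ S := by
  unfold xi
  calc ∑ v ∈ S.image g, ∑ x ∈ S.filter (fun x => g x = v),
        ∑ y ∈ S.filter (fun x => g x = v), (if x ≠ y then ℓ (dist x y) else 0)
      ≤ ∑ v ∈ S.image g, ∑ x ∈ S.filter (fun x => g x = v),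
        ∑ y ∈ S, (if x ≠ y then ℓ (dist x y) else 0) := by
        refine Finset.sum_le_sum fun v _ => Finset.sum_le_sum fun x _ => ?_
        exact Finset.sum_le_sum_of_subset (Finset.filter_subset _ _)
    _ = ∑ x ∈ S, ∑ y ∈ S, (if x ≠ y then ℓ (dist x y) else 0) :=
        Finset.sum_fiberwise_of_maps_to (fun x hx => Finset.mem_image_of_mem g hx) _

lemma xi_pairs_ge (ℓ : ℝ → ℝ≥0∞) (c : ℝ≥0∞) (F : Finset (E d))
    (h : ∀ x ∈ F, ∀ y ∈ F, x ≠ y → c ≤ ℓ (dist x y)) :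
    ((F.card * (F.card - 1) : ℕ) : ℝ≥0∞) * c ≤ xi ℓ F := by
  have key : ∀ x ∈ F, ((F.card - 1 : ℕ) : ℝ≥0∞) * c
      ≤ ∑ y ∈ F, (if x ≠ y then ℓ (dist x y) else 0) := by
    intro x hx
    calc ((F.card - 1 : ℕ) : ℝ≥0∞) * c = ∑ _y ∈ F.erase x, c := by
          rw [Finset.sum_const, Finset.card_erase_of_mem hx, nsmul_eq_mul]
      _ ≤ ∑ y ∈ F.erase x, (if x ≠ y then ℓ (dist x y) else 0) := by
          refine Finset.sum_le_sum fun y hy => ?_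
          rw [if_pos (Ne.symm (Finset.ne_of_mem_erase hy))]
          exact h x hx y (Finset.mem_of_mem_erase hy) (Ne.symm (Finset.ne_of_mem_erase hy))
      _ ≤ ∑ y ∈ F, (if x ≠ y then ℓ (dist x y) else 0) :=
          Finset.sum_le_sum_of_subset (Finset.erase_subset _ _)
  calc ((F.card * (F.card - 1) : ℕ) : ℝ≥0∞) * c
      = ∑ _x ∈ F, ((F.card - 1 : ℕ) : ℝ≥0∞) * c := by
        rw [Finset.sum_const, nsmul_eq_mul, Nat.cast_mul, mul_assoc]
    _ ≤ ∑ x ∈ F, ∑ y ∈ F, (if x ≠ y then ℓ (dist x y) else 0) := Finset.sum_le_sum key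
    _ = xi ℓ F := rfl

def boxIdx (δ : ℝ) (K : ℕ) (x : E d) : Fin d → ℕ := fun i => (⌊(x i + K/2)/δ⌋).toNat

lemma boxIdx_facts {δ : ℝ} (hδ : 0 < δ) {K : ℕ} {x : E d} (hx : x ∈ Qcube d K) (i : Fin d) :
    boxIdx δ K x i < ⌈(K:ℝ)/δ⌉₊ ∧
      0 ≤ x i + K/2 - δ * boxIdx δ K x i ∧ x i + K/2 - δ * boxIdx δ K x i < δ := by
  obtain ⟨h1, h2⟩ := hx i
  set a := (x i + (K:ℝ)/2)/δ with ha
  have ha0 : 0 ≤ a := div_nonneg (by linarith) hδ.le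
  have hcast : ((boxIdx δ K x i : ℕ) : ℝ) = ((⌊a⌋ : ℤ) : ℝ) := by
    unfold boxIdx
    rw [← ha]
    exact_mod_cast congrArg (Int.cast : ℤ → ℝ) (Int.toNat_of_nonneg (Int.floor_nonneg.2 ha0))
  have hfl : ((⌊a⌋ : ℤ) : ℝ) ≤ a := Int.floor_le a
  have hfl2 : a < ((⌊a⌋ : ℤ) : ℝ) + 1 := Int.lt_floor_add_one a
  have hda : δ * a = x i + K/2 := by
    rw [ha, mul_div_cancel₀ _ hδ.ne']
  refine ⟨?_, ?_, ?_⟩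
  · have haK : a < (K:ℝ)/δ := by
      rw [ha, div_lt_div_iff_of_pos_right hδ]
      linarith
    have : ((boxIdx δ K x i : ℕ) : ℝ) < (⌈(K:ℝ)/δ⌉₊ : ℝ) := by
      rw [hcast]
      exact lt_of_le_of_lt hfl (lt_of_lt_of_le haK (Nat.le_ceil _))
    exact_mod_cast this
  · have := mul_le_mul_of_nonneg_left hfl hδ.le
    rw [hda] at this
    rw [hcast]; linarith
  · have := mul_lt_mul_of_pos_left hfl2 hδ
    rw [hda] at this
    rw [hcast]; linarith

lemma same_box_le (ℓ : ℝ → ℝ≥0∞) {δ : ℝ} (hδ : 0 < δ) {K : ℕ} {x y : E d}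
    (hx : x ∈ Qcube d K) (hy : y ∈ Qcube d K) (hb : boxIdx δ K x = boxIdx δ K y)
    {c : ℝ≥0∞}
    (hc : ∀ x' y' : E d, (∀ i, x' i ∈ Set.Icc (0:ℝ) δ) → (∀ i, y' i ∈ Set.Icc (0:ℝ) δ) →
      c ≤ ℓ (dist x' y')) :
    c ≤ ℓ (dist x y) := by
  set t : E d := (WithLp.equiv 2 (Fin d → ℝ)).symm
    (fun i => δ * (boxIdx δ K x i : ℝ) - (K:ℝ)/2) with hts
  have ht : ∀ i, t i = δ * (boxIdx δ K x i : ℝ) - (K:ℝ)/2 := fun i => by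
    rw [hts]; rfl
  have hx' : ∀ i, (x - t) i ∈ Set.Icc (0:ℝ) δ := by
    intro i
    obtain ⟨_, hb1, hb2⟩ := boxIdx_facts hδ hx i
    rw [PiLp.sub_apply, ht]
    constructor <;> [linarith; linarith]
  have hy' : ∀ i, (y - t) i ∈ Set.Icc (0:ℝ) δ := by
    intro i
    obtain ⟨_, hb1, hb2⟩ := boxIdx_facts hδ hy i
    rw [PiLp.sub_apply, ht, hb]
    constructor <;> [linarith; linarith]
  have := hc (x - t) (y - t) hx' hy'
  rwa [dist_sub_right] at this

lemma phi_nonneg {t : ℝ} (ht : 0 ≤ t) : 0 ≤ phi t := by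
  unfold phi
  split_ifs with h1 h2
  · exact le_refl 0
  · exact ht
  · positivity

lemma quad (lam c' : ℝ) (hl : 0 < lam) (hc : 0 < c') (n : ℕ) :
    lam * n - c' * ((n * (n - 1) : ℕ) : ℝ) ≤ c' * phi (lam / c') := by
  have hphi0 : 0 ≤ phi (lam / c') := phi_nonneg (by positivity)
  rcases Nat.eq_zero_or_pos n with h | h
  · subst h; simp; positivity
  · have hcast : ((n * (n - 1) : ℕ) : ℝ) = (n : ℝ) * ((n : ℝ) - 1) := by
      push_cast [Nat.cast_sub h]; ring
    rw [hcast]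
    have hn1 : (1:ℝ) ≤ (n : ℝ) := by exact_mod_cast h
    by_cases hlt : lam / c' < 1
    · have hphieq : phi (lam / c') = lam / c' := by
        unfold phi; rw [if_neg (not_lt.2 (by positivity)), if_pos hlt]
      rw [hphieq, mul_div_cancel₀ _ hc.ne']
      have hlc : lam ≤ c' := ((div_lt_one hc).mp hlt).le
      nlinarith [mul_nonneg hl.le (sq_nonneg ((n:ℝ) - 1)),
        mul_nonneg (mul_nonneg (sub_nonneg.2 hlc) (sub_nonneg.2 hn1)) (by positivity : (0:ℝ) ≤ (n:ℝ))]
    · have hphieq : phi (lam / c') = (1 + lam / c') ^ 2 / 4 := by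
        unfold phi; rw [if_neg (not_lt.2 (by positivity)), if_neg hlt]
      rw [hphieq]
      have key : c' * ((1 + lam / c') ^ 2 / 4) = (c' + lam) ^ 2 / (4 * c') := by
        field_simp
      rw [key, le_div_iff₀ (by positivity)]
      nlinarith [sq_nonneg (2 * c' * (n:ℝ) - (c' + lam))]

lemma fiber_bound (ℓ : ℝ → ℝ≥0∞) {δ : ℝ} (hδ : 0 < δ) (c : ℝ≥0∞)
    (hc : ∀ x' y' : E d, (∀ i, x' i ∈ Set.Icc (0:ℝ) δ) → (∀ i, y' i ∈ Set.Icc (0:ℝ) δ) →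
      c ≤ ℓ (dist x' y'))
    (K : ℕ) (S : Finset (E d)) (hS : ↑S ⊆ Qcube d K) :
    ∃ T : Finset (Fin d → ℕ), T.card ≤ (⌈(K:ℝ)/δ⌉₊) ^ d ∧
      S.card = ∑ v ∈ T, (S.filter fun x => boxIdx δ K x = v).card ∧
      ∑ v ∈ T, (((S.filter fun x => boxIdx δ K x = v).card *
          ((S.filter fun x => boxIdx δ K x = v).card - 1) : ℕ) : ℝ≥0∞) * c ≤ xi ℓ S := by
  refine ⟨S.image (boxIdx δ K), ?_, Finset.card_eq_sum_card_fiberwise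
    (fun x hx => Finset.mem_image_of_mem _ hx), ?_⟩
  · have hsub : S.image (boxIdx δ K) ⊆ Fintype.piFinset (fun _ : Fin d => Finset.range ⌈(K:ℝ)/δ⌉₊) := by
      intro v hv
      obtain ⟨x, hx, rfl⟩ := Finset.mem_image.1 hv
      exact Fintype.mem_piFinset.2 fun i => Finset.mem_range.2 (boxIdx_facts hδ (hS hx) i).1
    calc (S.image (boxIdx δ K)).card ≤ _ := Finset.card_le_card hsub
      _ = (⌈(K:ℝ)/δ⌉₊) ^ d := by simp
  · refine le_trans (Finset.sum_le_sum fun v hv => ?_) (xi_fiber ℓ (boxIdx δ K) S)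
    refine xi_pairs_ge ℓ c _ fun x hx y hy hxy => ?_
    obtain ⟨hxS, hxv⟩ := Finset.mem_filter.1 hx
    obtain ⟨hyS, hyv⟩ := Finset.mem_filter.1 hy
    exact same_box_le ℓ hδ (hS hxS) (hS hyS) (hxv.trans hyv.symm) hc

lemma elem_le (ℓ : ℝ → ℝ≥0∞) {δ : ℝ} (hδ : 0 < δ) (c : ℝ≥0∞) (hc0 : c ≠ 0) (hctop : c ≠ ⊤)
    (hc : ∀ x' y' : E d, (∀ i, x' i ∈ Set.Icc (0:ℝ) δ) → (∀ i, y' i ∈ Set.Icc (0:ℝ) δ) →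
      c ≤ ℓ (dist x' y'))
    (K : ℕ) (S : Finset (E d)) (hS : ↑S ⊆ Qcube d K) (hxi : xi ℓ S ≠ ⊤)
    (lam : ℝ) (hlam : 0 < lam) :
    lam * S.card - (xi ℓ S).toReal
      ≤ ((⌈(K:ℝ)/δ⌉₊ : ℝ)) ^ d * (c.toReal * phi (lam / c.toReal)) := by
  have hc' : 0 < c.toReal := ENNReal.toReal_pos hc0 hctop
  obtain ⟨T, hT, hcard, hxixi⟩ := fiber_bound ℓ hδ c hc K S hS
  set N : (Fin d → ℕ) → ℕ := fun v => (S.filter fun x => boxIdx δ K x = v).card with hN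
  have hterm : ∀ v ∈ T, (((N v * (N v - 1) : ℕ) : ℝ≥0∞) * c) ≠ ⊤ :=
    fun v _ => ENNReal.mul_ne_top (ENNReal.natCast_ne_top _) hctop
  have hstep : ∑ v ∈ T, c.toReal * ((N v * (N v - 1) : ℕ) : ℝ) ≤ (xi ℓ S).toReal := by
    have h1 := ENNReal.toReal_mono hxi hxixi
    rw [ENNReal.toReal_sum hterm] at h1
    simp only [ENNReal.toReal_mul, ENNReal.toReal_natCast] at h1
    calc ∑ v ∈ T, c.toReal * ((N v * (N v - 1) : ℕ) : ℝ)
        = ∑ v ∈ T, ((N v * (N v - 1) : ℕ) : ℝ) * c.toReal := by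
          exact Finset.sum_congr rfl fun v _ => mul_comm _ _
      _ ≤ _ := h1
  have hmain : lam * S.card - (xi ℓ S).toReal
      ≤ ∑ v ∈ T, (lam * N v - c.toReal * ((N v * (N v - 1) : ℕ) : ℝ)) := by
    have h1 : lam * (S.card : ℝ) = ∑ v ∈ T, lam * (N v : ℝ) := by
      rw [← Finset.mul_sum]
      congr 1
      rw [hcard]
      push_cast
      rfl
    rw [h1, Finset.sum_sub_distrib]
    linarith [hstep]
  calc lam * S.card - (xi ℓ S).toReal
      ≤ ∑ v ∈ T, (lam * N v - c.toReal * ((N v * (N v - 1) : ℕ) : ℝ)) := hmain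
    _ ≤ ∑ v ∈ T, c.toReal * phi (lam / c.toReal) :=
        Finset.sum_le_sum fun v _ => quad lam c.toReal hlam hc' (N v)
    _ = T.card * (c.toReal * phi (lam / c.toReal)) := by
        rw [Finset.sum_const, nsmul_eq_mul]
    _ ≤ ((⌈(K:ℝ)/δ⌉₊ : ℝ)) ^ d * (c.toReal * phi (lam / c.toReal)) := by
        refine mul_le_mul_of_nonneg_right ?_
          (mul_nonneg hc'.le (phi_nonneg (by positivity)))
        exact_mod_cast hT

lemma Gam_le_of_c (ℓ : ℝ → ℝ≥0∞) {δ : ℝ} (hδ : 0 < δ) (c : ℝ≥0∞) (hc0 : c ≠ 0) (hctop : c ≠ ⊤)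
    (hc : ∀ x' y' : E d, (∀ i, x' i ∈ Set.Icc (0:ℝ) δ) → (∀ i, y' i ∈ Set.Icc (0:ℝ) δ) →
      c ≤ ℓ (dist x' y'))
    (lam : ℝ) (hlam : 0 < lam) (K : ℕ) :
    Gam ℓ lam (Qcube d K) ≤ ((⌈(K:ℝ)/δ⌉₊ : ℝ)) ^ d * (c.toReal * phi (lam / c.toReal)) := by
  have hc' : 0 < c.toReal := ENNReal.toReal_pos hc0 hctop
  rw [Gam_def]
  have hB : 0 ≤ ((⌈(K:ℝ)/δ⌉₊ : ℝ)) ^ d * (c.toReal * phi (lam / c.toReal)) :=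
    mul_nonneg (by positivity) (mul_nonneg hc'.le (phi_nonneg (by positivity)))
  refine Real.sSup_le ?_ hB
  rintro x ⟨S, hS, hxi, rfl⟩
  exact elem_le ℓ hδ c hc0 hctop hc K S hS hxi lam hlam

lemma Gam_le_top (ℓ : ℝ → ℝ≥0∞) {δ : ℝ} (hδ : 0 < δ)
    (hc : ∀ x' y' : E d, (∀ i, x' i ∈ Set.Icc (0:ℝ) δ) → (∀ i, y' i ∈ Set.Icc (0:ℝ) δ) →
      (⊤ : ℝ≥0∞) ≤ ℓ (dist x' y'))
    (lam : ℝ) (hlam : 0 ≤ lam) (K : ℕ) :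
    Gam ℓ lam (Qcube d K) ≤ ((⌈(K:ℝ)/δ⌉₊ : ℝ)) ^ d * lam := by
  rw [Gam_def]
  refine Real.sSup_le ?_ (by positivity)
  rintro x ⟨S, hS, hxi, rfl⟩
  obtain ⟨T, hT, hcard, hxixi⟩ := fiber_bound ℓ hδ ⊤ hc K S hS
  set N : (Fin d → ℕ) → ℕ := fun v => (S.filter fun x => boxIdx δ K x = v).card with hN
  have hNle : ∀ v ∈ T, N v ≤ 1 := by
    intro v hv
    by_contra hcon
    push_neg at hcon
    have hne0 : ((N v * (N v - 1) : ℕ) : ℝ≥0∞) ≠ 0 := by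
      have : 0 < N v * (N v - 1) := Nat.mul_pos (by omega) (by omega)
      exact_mod_cast this.ne'
    have htop : (((N v * (N v - 1) : ℕ) : ℝ≥0∞) * ⊤) = ⊤ := ENNReal.mul_top hne0
    have h2 : (⊤ : ℝ≥0∞) ≤ xi ℓ S := by
      have h1 : ((N v * (N v - 1) : ℕ) : ℝ≥0∞) * ⊤
          ≤ ∑ v ∈ T, ((N v * (N v - 1) : ℕ) : ℝ≥0∞) * ⊤ :=
        Finset.single_le_sum (f := fun v => ((N v * (N v - 1) : ℕ) : ℝ≥0∞) * ⊤)
          (fun _ _ => zero_le) hv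
      rw [htop] at h1
      exact h1.trans hxixi
    exact hxi (top_le_iff.mp h2)
  have hScard : S.card ≤ ⌈(K:ℝ)/δ⌉₊ ^ d := by
    calc S.card = ∑ v ∈ T, N v := hcard
      _ ≤ ∑ _v ∈ T, 1 := Finset.sum_le_sum hNle
      _ = T.card := by simp
      _ ≤ _ := hT
  have h3 : lam * S.card ≤ ((⌈(K:ℝ)/δ⌉₊ : ℝ)) ^ d * lam := by
    rw [mul_comm]
    refine mul_le_mul_of_nonneg_right ?_ hlam
    exact_mod_cast hScard
  linarith [ENNReal.toReal_nonneg (a := xi ℓ S)]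

lemma gl_le_seq (ℓ : ℝ → ℝ≥0∞) (lam : ℝ) (k : ℕ+) :
    gl d ℓ lam ≤ Gam ℓ lam (Qcube d k) / (k : ℝ) ^ d := by
  refine ciInf_le ⟨0, ?_⟩ k
  rintro x ⟨j, rfl⟩
  exact div_nonneg (Gam_nonneg ℓ lam _) (by positivity)

lemma gl_nonneg (ℓ : ℝ → ℝ≥0∞) (lam : ℝ) : 0 ≤ gl d ℓ lam :=
  Real.iInf_nonneg fun k => div_nonneg (Gam_nonneg ℓ lam _) (by positivity)

lemma Gam_eq_zero_of_nonpos (ℓ : ℝ → ℝ≥0∞) {lam : ℝ} (hlam : lam ≤ 0) (B : Set (E d)) :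
    Gam ℓ lam B = 0 := by
  refine le_antisymm ?_ (Gam_nonneg ℓ lam B)
  rw [Gam_def]
  refine Real.sSup_le ?_ le_rfl
  rintro x ⟨S, hS, hxi, rfl⟩
  have h1 : lam * S.card ≤ 0 := mul_nonpos_of_nonpos_of_nonneg hlam (Nat.cast_nonneg _)
  linarith [ENNReal.toReal_nonneg (a := xi ℓ S)]

lemma gl_eq_zero_of_nonpos (ℓ : ℝ → ℝ≥0∞) {lam : ℝ} (hlam : lam ≤ 0) :
    gl d ℓ lam = 0 := by
  unfold gl
  simp only [Gam_eq_zero_of_nonpos ℓ hlam, zero_div]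
  exact ciInf_const

lemma gl_le_of_bounds (ℓ : ℝ → ℝ≥0∞) {δ : ℝ} (hδ : 0 < δ) (lam : ℝ) {B : ℝ} (hB : 0 ≤ B)
    (h : ∀ K : ℕ, 0 < K → Gam ℓ lam (Qcube d K) ≤ ((⌈(K:ℝ)/δ⌉₊ : ℝ)) ^ d * B) :
    gl d ℓ lam ≤ B / δ ^ d := by
  have key : ∀ n : ℕ, gl d ℓ lam ≤ (1/δ + 1/(n+1)) ^ d * B := by
    intro n
    have hK : (0:ℝ) < ((n+1 : ℕ) : ℝ) := by positivity
    refine le_trans (gl_le_seq (d := d) ℓ lam ⟨n+1, n.succ_pos⟩) ?_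
    show Gam ℓ lam (Qcube d (n+1)) / ((n+1:ℕ):ℝ) ^ d ≤ _
    rw [div_le_iff₀ (by positivity)]
    refine le_trans (h (n+1) n.succ_pos) ?_
    have hceil : ((⌈((n+1:ℕ):ℝ)/δ⌉₊ : ℝ)) ≤ ((n+1:ℕ):ℝ) * (1/δ + 1/(n+1)) := by
      have h1 := Nat.ceil_lt_add_one (show (0:ℝ) ≤ ((n+1:ℕ):ℝ)/δ by positivity)
      have h2 : ((n+1:ℕ):ℝ) * (1/δ + 1/(n+1)) = ((n+1:ℕ):ℝ)/δ + 1 := by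
        push_cast
        field_simp
      rw [h2]
      exact h1.le
    calc ((⌈((n+1:ℕ):ℝ)/δ⌉₊ : ℝ)) ^ d * B ≤ (((n+1:ℕ):ℝ) * (1/δ + 1/(n+1))) ^ d * B := by
          exact mul_le_mul_of_nonneg_right (pow_le_pow_left₀ (by positivity) hceil d) hB
      _ = (1/δ + 1/(n+1)) ^ d * B * ((n+1:ℕ):ℝ) ^ d := by
          rw [mul_pow]; push_cast; ring
  have htend : Tendsto (fun n : ℕ => (1/δ + 1/((n:ℝ)+1)) ^ d * B) atTop (𝓝 ((1/δ + 0) ^ d * B)) :=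
    (((tendsto_const_nhds).add tendsto_one_div_add_atTop_nhds_zero_nat).pow d).mul_const B
  have heq : (1/δ + 0) ^ d * B = B / δ ^ d := by
    rw [add_zero, div_pow, one_pow]
    ring
  rw [heq] at htend
  refine ge_of_tendsto htend (Filter.Eventually.of_forall fun n => ?_)
  have := key n
  push_cast at this ⊢
  convert this using 3

lemma exists_const (hd : 0 < d) (ℓ : ℝ → ℝ≥0∞) (hlsc : LowerSemicontinuous ℓ)
    (h0 : 0 < ℓ 0) :
    ∃ δ₀ : ℝ, 0 < δ₀ ∧ ∃ c : ℝ≥0∞, c ≠ 0 ∧ c ≠ ⊤ ∧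
      ∀ x' y' : E d, (∀ i, x' i ∈ Set.Icc (0:ℝ) δ₀) → (∀ i, y' i ∈ Set.Icc (0:ℝ) δ₀) →
        c ≤ ℓ (dist x' y') := by
  obtain ⟨c, hc0, hcne, hclt⟩ : ∃ c : ℝ≥0∞, c ≠ 0 ∧ c ≠ ⊤ ∧ c < ℓ 0 := by
    rcases eq_or_ne (ℓ 0) ⊤ with h | h
    · exact ⟨1, one_ne_zero, ENNReal.one_ne_top, h ▸ ENNReal.one_lt_top⟩
    · refine ⟨ℓ 0 / 2, ?_, ?_, ENNReal.half_lt_self h0.ne' h⟩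
      · simp [ENNReal.div_eq_zero_iff, h0.ne']
      · exact (ENNReal.div_lt_top h (by norm_num)).ne
  have hev : ∀ᶠ r in 𝓝 (0:ℝ), c < ℓ r := hlsc 0 c hclt
  rw [Metric.eventually_nhds_iff] at hev
  obtain ⟨ε, hε, hball⟩ := hev
  refine ⟨ε/(2*d), by positivity, c, hc0, hcne, ?_⟩
  intro x' y' hx' hy'
  refine le_of_lt (hball ?_)
  have hdd : (0:ℝ) < (d:ℝ) := by exact_mod_cast hd
  have hb : dist x' y' ≤ (d:ℝ) * (ε/(2*d)) := by
    rw [EuclideanSpace.dist_eq]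
    set δ₀ := ε/(2*d) with hδ₀
    have hδ₀0 : 0 ≤ δ₀ := by positivity
    have h1 : ∀ i, dist (x' i) (y' i) ^ 2 ≤ δ₀ ^ 2 := by
      intro i
      obtain ⟨ha1, ha2⟩ := hx' i
      obtain ⟨hb1, hb2⟩ := hy' i
      rw [Real.dist_eq]
      have habs : |x' i - y' i| ≤ δ₀ := abs_sub_le_iff.2 ⟨by linarith, by linarith⟩
      nlinarith [abs_nonneg (x' i - y' i)]
    have h2 : ∑ i, dist (x' i) (y' i) ^ 2 ≤ (d:ℝ) * δ₀ ^ 2 := by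
      calc ∑ i, dist (x' i) (y' i) ^ 2 ≤ ∑ _i : Fin d, δ₀ ^ 2 := Finset.sum_le_sum fun i _ => h1 i
        _ = (d:ℝ) * δ₀ ^ 2 := by simp [Finset.sum_const, nsmul_eq_mul]
    calc Real.sqrt (∑ i, dist (x' i) (y' i) ^ 2) ≤ Real.sqrt ((d:ℝ) * δ₀ ^ 2) :=
          Real.sqrt_le_sqrt h2
      _ ≤ Real.sqrt (((d:ℝ) * δ₀) ^ 2) := by
          refine Real.sqrt_le_sqrt ?_
          have hdd1 : (1:ℝ) ≤ (d:ℝ) := by exact_mod_cast hd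
          nlinarith [mul_nonneg (mul_nonneg hdd.le (sub_nonneg.2 hdd1)) (sq_nonneg δ₀)]
      _ = (d:ℝ) * δ₀ := Real.sqrt_sq (by positivity)
  have hhalf : (d:ℝ) * (ε/(2*d)) = ε/2 := by
    field_simp
  rw [Real.dist_eq, sub_zero, abs_of_nonneg dist_nonneg]
  linarith

lemma Qcube_mono {k K : ℕ} (h : k ≤ K) : Qcube d k ⊆ Qcube d K := by
  intro x hx i
  obtain ⟨h1, h2⟩ := hx i
  have : (k:ℝ) ≤ (K:ℝ) := by exact_mod_cast h
  constructor <;> [linarith; linarith]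

section WithConst

variable (ℓ : ℝ → ℝ≥0∞) {δ₀ : ℝ} (hδ₀ : 0 < δ₀) (c : ℝ≥0∞) (hc0 : c ≠ 0) (hcne : c ≠ ⊤)
  (hc : ∀ x' y' : E d, (∀ i, x' i ∈ Set.Icc (0:ℝ) δ₀) → (∀ i, y' i ∈ Set.Icc (0:ℝ) δ₀) →
    c ≤ ℓ (dist x' y'))

include hδ₀ hc0 hcne hc

lemma bddAbove_GamSet (lam : ℝ) (K : ℕ) : BddAbove (GamSet ℓ lam (Qcube d K)) := by
  refine ⟨((⌈(K:ℝ)/δ₀⌉₊ : ℝ)) ^ d * (c.toReal * phi ((max lam 1) / c.toReal)), ?_⟩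
  rintro x ⟨S, hS, hxi, rfl⟩
  have h1 : lam * S.card - (xi ℓ S).toReal ≤ (max lam 1) * S.card - (xi ℓ S).toReal := by
    have := mul_le_mul_of_nonneg_right (le_max_left lam 1) (Nat.cast_nonneg (α := ℝ) S.card)
    linarith
  exact h1.trans (elem_le ℓ hδ₀ c hc0 hcne hc K S hS hxi (max lam 1)
    (lt_of_lt_of_le one_pos (le_max_right lam 1)))

lemma Gam_mono (lam : ℝ) {k K : ℕ} (h : k ≤ K) :
    Gam ℓ lam (Qcube d k) ≤ Gam ℓ lam (Qcube d K) := by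
  rw [Gam_def, Gam_def]
  refine csSup_le_csSup (bddAbove_GamSet ℓ hδ₀ c hc0 hcne hc lam K)
    ⟨0, zero_mem_GamSet ℓ lam _⟩ ?_
  rintro x ⟨S, hS, hxi, rfl⟩
  exact ⟨S, fun z hz => Qcube_mono h (hS hz), hxi, rfl⟩

lemma Gam_convex (lam₁ lam₂ a b : ℝ) (ha : 0 ≤ a) (hb : 0 ≤ b) (hab : a + b = 1) (K : ℕ) :
    Gam ℓ (a * lam₁ + b * lam₂) (Qcube d K)
      ≤ a * Gam ℓ lam₁ (Qcube d K) + b * Gam ℓ lam₂ (Qcube d K) := by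
  have hg1 : 0 ≤ Gam ℓ lam₁ (Qcube d K) := Gam_nonneg ℓ lam₁ _
  have hg2 : 0 ≤ Gam ℓ lam₂ (Qcube d K) := Gam_nonneg ℓ lam₂ _
  rw [Gam_def]
  refine Real.sSup_le ?_ (by positivity)
  rintro x ⟨S, hS, hxi, rfl⟩
  have e1 : lam₁ * S.card - (xi ℓ S).toReal ≤ Gam ℓ lam₁ (Qcube d K) :=
    le_csSup (bddAbove_GamSet ℓ hδ₀ c hc0 hcne hc lam₁ K) ⟨S, hS, hxi, rfl⟩
  have e2 : lam₂ * S.card - (xi ℓ S).toReal ≤ Gam ℓ lam₂ (Qcube d K) :=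
    le_csSup (bddAbove_GamSet ℓ hδ₀ c hc0 hcne hc lam₂ K) ⟨S, hS, hxi, rfl⟩
  have heq : (a * lam₁ + b * lam₂) * S.card - (xi ℓ S).toReal
      = a * (lam₁ * S.card - (xi ℓ S).toReal) + b * (lam₂ * S.card - (xi ℓ S).toReal) := by
    linear_combination ((xi ℓ S).toReal) * hab
  rw [heq]
  exact add_le_add (mul_le_mul_of_nonneg_left e1 ha) (mul_le_mul_of_nonneg_left e2 hb)

lemma Gam_submul (lam : ℝ) (k m : ℕ) (hk : 0 < k) :
    Gam ℓ lam (Qcube d (m * k)) ≤ (m : ℝ) ^ d * Gam ℓ lam (Qcube d k) := by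
  classical
  have hg0 : 0 ≤ Gam ℓ lam (Qcube d k) := Gam_nonneg ℓ lam _
  rw [Gam_def]
  refine Real.sSup_le ?_ (by positivity)
  rintro x ⟨S, hS, hxi, rfl⟩
  set K := m * k with hK
  have hkR : (0:ℝ) < (k:ℝ) := by exact_mod_cast hk
  set g : E d → (Fin d → ℕ) := boxIdx (k:ℝ) K with hg
  set T := S.image g with hT
  set F : (Fin d → ℕ) → Finset (E d) := fun v => S.filter fun x => g x = v with hF
  have hfib_le : ∑ v ∈ T, xi ℓ (F v) ≤ xi ℓ S := xi_fiber ℓ g S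
  have hFne : ∀ v ∈ T, xi ℓ (F v) ≠ ⊤ := by
    intro v hv
    have h1 : xi ℓ (F v) ≤ ∑ v ∈ T, xi ℓ (F v) :=
      Finset.single_le_sum (f := fun v => xi ℓ (F v)) (fun _ _ => zero_le) hv
    exact fun htop => hxi (top_le_iff.mp (htop ▸ h1.trans hfib_le))
  have hsum_toReal : ∑ v ∈ T, (xi ℓ (F v)).toReal ≤ (xi ℓ S).toReal := by
    rw [← ENNReal.toReal_sum hFne]
    exact ENNReal.toReal_mono hxi hfib_le
  have hcard : S.card = ∑ v ∈ T, (F v).card :=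
    Finset.card_eq_sum_card_fiberwise (fun x hx => Finset.mem_image_of_mem _ hx)
  have hTcard : T.card ≤ m ^ d := by
    have hceil : ⌈((K:ℕ):ℝ)/(k:ℝ)⌉₊ = m := by
      rw [hK]
      push_cast
      rw [mul_div_assoc, div_self hkR.ne', mul_one, Nat.ceil_natCast]
    have hsub : T ⊆ Fintype.piFinset (fun _ : Fin d => Finset.range m) := by
      intro v hv
      obtain ⟨y, hy, rfl⟩ := Finset.mem_image.1 hv
      refine Fintype.mem_piFinset.2 fun i => Finset.mem_range.2 ?_
      have := (boxIdx_facts hkR (hS hy) i).1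
      rwa [hceil] at this
    calc T.card ≤ _ := Finset.card_le_card hsub
      _ = m ^ d := by simp
  have hfv : ∀ v ∈ T, lam * (F v).card - (xi ℓ (F v)).toReal ≤ Gam ℓ lam (Qcube d k) := by
    intro v hv
    set t : E d := (WithLp.equiv 2 (Fin d → ℝ)).symm
      (fun i => (k:ℝ) * (v i) - (K:ℝ)/2 + (k:ℝ)/2) with hts
    have ht : ∀ i, t i = (k:ℝ) * (v i) - (K:ℝ)/2 + (k:ℝ)/2 := fun i => by
      rw [hts]; rfl
    set S' := (F v).image fun z => z - t with hS'
    have hinj : ∀ a ∈ F v, ∀ b ∈ F v, a - t = b - t → a = b := fun a _ b _ h => by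
      simpa [sub_left_inj] using h
    have hcard' : S'.card = (F v).card := Finset.card_image_of_injOn
      (fun a ha b hb h => hinj a ha b hb h)
    have hxi' : xi ℓ S' = xi ℓ (F v) := xi_image_sub ℓ t (F v)
    have hsub' : ↑S' ⊆ Qcube d k := by
      intro z hz
      rw [hS', Finset.coe_image] at hz
      obtain ⟨w, hw, rfl⟩ := hz
      have hw' := Finset.mem_filter.1 hw
      show w - t ∈ Qcube d k
      intro i
      have hfr := boxIdx_facts hkR (hS hw'.1) i
      have hgv : g w i = v i := by rw [hw'.2]
      rw [PiLp.sub_apply, ht, ← hgv]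
      constructor <;> [linarith [hfr.2.1]; linarith [hfr.2.2]]
    exact le_csSup (bddAbove_GamSet ℓ hδ₀ c hc0 hcne hc lam k)
      ⟨S', hsub', hxi' ▸ hFne v hv, by rw [hcard', hxi']⟩
  have h1 : lam * (S.card : ℝ) = ∑ v ∈ T, lam * ((F v).card : ℝ) := by
    rw [← Finset.mul_sum]
    congr 1
    rw [hcard]
    push_cast
    rfl
  calc lam * S.card - (xi ℓ S).toReal
      ≤ ∑ v ∈ T, (lam * (F v).card - (xi ℓ (F v)).toReal) := by
        rw [Finset.sum_sub_distrib, ← h1]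
        linarith [hsum_toReal]
    _ ≤ ∑ _v ∈ T, Gam ℓ lam (Qcube d k) := Finset.sum_le_sum hfv
    _ = T.card * Gam ℓ lam (Qcube d k) := by rw [Finset.sum_const, nsmul_eq_mul]
    _ ≤ (m : ℝ) ^ d * Gam ℓ lam (Qcube d k) := by
        refine mul_le_mul_of_nonneg_right ?_ hg0
        exact_mod_cast hTcard

lemma gl_tendsto (lam : ℝ) :
    Tendsto (fun n : ℕ => Gam ℓ lam (Qcube d (n+1)) / ((n+1:ℕ):ℝ) ^ d) atTop
      (𝓝 (gl d ℓ lam)) := by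
  set G : ℕ → ℝ := fun K => Gam ℓ lam (Qcube d K) with hG
  set gseq : ℕ → ℝ := fun n => G (n+1) / ((n+1:ℕ):ℝ) ^ d with hgseq
  have hlow : ∀ n, gl d ℓ lam ≤ gseq n := fun n =>
    gl_le_seq (d := d) ℓ lam ⟨n+1, n.succ_pos⟩
  rw [tendsto_order]
  constructor
  · intro a ha
    exact Filter.Eventually.of_forall fun n => ha.trans_le (hlow n)
  · intro b hb
    have hlt : gl d ℓ lam < (gl d ℓ lam + b)/2 := by linarith
    have hlt' : (⨅ k : ℕ+, Gam ℓ lam (Qcube d k) / (k : ℝ) ^ d) < (gl d ℓ lam + b)/2 := hlt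
    obtain ⟨k, hk⟩ := exists_lt_of_ciInf_lt hlt'
    set gk : ℝ := Gam ℓ lam (Qcube d k) / ((k:ℕ):ℝ) ^ d with hgk
    have hkR : (0:ℝ) < ((k:ℕ):ℝ) := by exact_mod_cast k.pos
    have hgk0 : 0 ≤ gk := div_nonneg (Gam_nonneg ℓ lam _) (by positivity)
    have hb2 : gk < b := by
      have : gk = Gam ℓ lam (Qcube d k) / (k : ℝ) ^ d := rfl
      rw [this]
      exact hk.trans_le (by linarith)
    have hupper : ∀ n : ℕ, gseq n ≤ (1 + ((k:ℕ):ℝ)/((n+1:ℕ):ℝ)) ^ d * gk := by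
      intro n
      set q := (n+1)/(k:ℕ) + 1 with hq
      have h1 : n+1 ≤ q * (k:ℕ) := by
        have hdm := Nat.div_add_mod (n+1) (k:ℕ)
        have hmod := Nat.mod_lt (n+1) k.pos
        calc n+1 = (k:ℕ) * ((n+1)/(k:ℕ)) + (n+1) % (k:ℕ) := hdm.symm
          _ ≤ (k:ℕ) * ((n+1)/(k:ℕ)) + (k:ℕ) := by
              exact Nat.add_le_add_left hmod.le _
          _ = q * (k:ℕ) := by rw [hq]; ring
      have h2 : q * (k:ℕ) ≤ (n+1) + (k:ℕ) := by
        have := Nat.div_mul_le_self (n+1) (k:ℕ)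
        calc q * (k:ℕ) = (n+1)/(k:ℕ) * (k:ℕ) + (k:ℕ) := by rw [hq]; ring
          _ ≤ (n+1) + (k:ℕ) := Nat.add_le_add_right this _
      have h3 : G (n+1) ≤ G (q * (k:ℕ)) := Gam_mono ℓ hδ₀ c hc0 hcne hc lam h1
      have h4 : G (q * (k:ℕ)) ≤ (q:ℝ) ^ d * G (k:ℕ) :=
        Gam_submul ℓ hδ₀ c hc0 hcne hc lam (k:ℕ) q k.pos
      have h5 : gseq n ≤ (q:ℝ) ^ d * G (k:ℕ) / ((n+1:ℕ):ℝ) ^ d := by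
        show G (n+1) / ((n+1:ℕ):ℝ) ^ d ≤ _
        gcongr
        exact h3.trans h4
      have hGk : G (k:ℕ) = gk * ((k:ℕ):ℝ) ^ d := by
        rw [hgk]
        field_simp
        rfl
      refine h5.trans ?_
      have h6 : (q:ℝ) ^ d * G (k:ℕ) / ((n+1:ℕ):ℝ) ^ d
          = (((q * (k:ℕ) : ℕ):ℝ)/((n+1:ℕ):ℝ)) ^ d * gk := by
        rw [hGk]
        push_cast
        rw [div_pow, mul_pow]
        ring
      rw [h6]
      refine mul_le_mul_of_nonneg_right ?_ hgk0
      refine pow_le_pow_left₀ (by positivity) ?_ d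
      have hc2 : ((q * (k:ℕ) : ℕ):ℝ) ≤ ((n+1:ℕ):ℝ) + ((k:ℕ):ℝ) := by exact_mod_cast h2
      have h7 : (1 + ((k:ℕ):ℝ)/((n+1:ℕ):ℝ)) = (((n+1:ℕ):ℝ) + ((k:ℕ):ℝ))/((n+1:ℕ):ℝ) := by
        push_cast
        field_simp
      rw [h7]
      gcongr
    have htf : Tendsto (fun n : ℕ => (1 + ((k:ℕ):ℝ)/((n+1:ℕ):ℝ)) ^ d * gk) atTop
        (𝓝 (((1:ℝ) + 0) ^ d * gk)) := by
      refine Tendsto.mul_const gk (Tendsto.pow ?_ d)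
      refine tendsto_const_nhds.add ?_
      have h8 := tendsto_one_div_add_atTop_nhds_zero_nat.const_mul ((k:ℕ):ℝ)
      rw [mul_zero] at h8
      refine h8.congr fun n => ?_
      push_cast
      rw [mul_one_div]
    have hone : ((1:ℝ) + 0) ^ d * gk = gk := by simp
    rw [hone] at htf
    refine (htf.eventually_lt_const hb2).mono fun n hn => ?_
    exact lt_of_le_of_lt (hupper n) hn

end WithConst

end GlAux

/-- Upper bound for the thermodynamic limit `g_ℓ`, and its basic properties:
`g_ℓ` is convex, continuous, nonnegative, vanishes on `(-∞,0]` and satisfies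
`g_ℓ(λ) ≤ δ^{-d} ℓ₋(δ) φ(λ/ℓ₋(δ))` (reading `g_ℓ(λ) ≤ δ^{-d} λ` if `ℓ₋(δ) = ∞`). -/
theorem gl_upper_bound_and_properties {d : ℕ} (hd : 0 < d) (ℓ : ℝ → ℝ≥0∞) (r₀ : ℝ)
    (hlsc : LowerSemicontinuous ℓ) (h0 : 0 < ℓ 0)
    (hfin : ∀ r ≥ r₀, ℓ r ≠ ⊤) (hanti : AntitoneOn ℓ (Set.Ici r₀))
    (hlim : Tendsto ℓ atTop (nhds 0))
    (hint : ∫⁻ t in Set.Ioi r₀, ℓ t * ENNReal.ofReal (t ^ (d - 1)) ≠ ⊤) :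
    ConvexOn ℝ Set.univ (gl d ℓ) ∧ Continuous (gl d ℓ) ∧
    (∀ lam : ℝ, 0 ≤ gl d ℓ lam) ∧ (∀ lam : ℝ, lam ≤ 0 → gl d ℓ lam = 0) ∧
    (∀ δ > (0:ℝ), 0 < ellMinus d ℓ δ → ∀ lam > (0:ℝ),
      (ellMinus d ℓ δ ≠ ⊤ →
        gl d ℓ lam ≤ (ellMinus d ℓ δ).toReal / δ ^ d *
          phi (lam / (ellMinus d ℓ δ).toReal)) ∧
      (ellMinus d ℓ δ = ⊤ → gl d ℓ lam ≤ lam / δ ^ d)) := by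
  classical
  obtain ⟨δ₀, hδ₀, c₀, hc₀0, hc₀ne, hc₀⟩ := GlAux.exists_const hd ℓ hlsc h0
  have htend := fun lam => GlAux.gl_tendsto ℓ hδ₀ c₀ hc₀0 hc₀ne hc₀ lam
  have hconv : ConvexOn ℝ Set.univ (gl d ℓ) := by
    refine ⟨convex_univ, ?_⟩
    intro x _ y _ a b ha hb hab
    simp only [smul_eq_mul]
    refine ge_of_tendsto (((htend x).const_mul a).add ((htend y).const_mul b))
      (Filter.Eventually.of_forall fun n => ?_)
    have h1 : gl d ℓ (a*x+b*y) ≤ Gam ℓ (a*x+b*y) (Qcube d (n+1)) / ((n+1:ℕ):ℝ) ^ d :=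
      GlAux.gl_le_seq (d := d) ℓ _ ⟨n+1, n.succ_pos⟩
    refine h1.trans ?_
    have h2 := GlAux.Gam_convex ℓ hδ₀ c₀ hc₀0 hc₀ne hc₀ x y a b ha hb hab (n+1)
    calc Gam ℓ (a*x+b*y) (Qcube d (n+1)) / ((n+1:ℕ):ℝ) ^ d
        ≤ (a * Gam ℓ x (Qcube d (n+1)) + b * Gam ℓ y (Qcube d (n+1))) / ((n+1:ℕ):ℝ) ^ d := by
          gcongr
      _ = a * (Gam ℓ x (Qcube d (n+1)) / ((n+1:ℕ):ℝ) ^ d)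
            + b * (Gam ℓ y (Qcube d (n+1)) / ((n+1:ℕ):ℝ) ^ d) := by ring
  refine ⟨hconv, ?_, fun lam => GlAux.gl_nonneg ℓ lam,
    fun lam hlam => GlAux.gl_eq_zero_of_nonpos ℓ hlam, ?_⟩
  · exact continuousOn_univ.mp (hconv.continuousOn isOpen_univ)
  · intro δ hδ hpos lam hlam
    have hcbox : ∀ x' y' : EuclideanSpace ℝ (Fin d),
        (∀ i, x' i ∈ Set.Icc (0:ℝ) δ) → (∀ i, y' i ∈ Set.Icc (0:ℝ) δ) →
        ellMinus d ℓ δ ≤ ℓ (dist x' y') := by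
      intro x' y' hx' hy'
      have h1 : ellMinus d ℓ δ
          ≤ ⨅ y ∈ {y : EuclideanSpace ℝ (Fin d) | ∀ i, y i ∈ Set.Icc (0:ℝ) δ},
            ℓ (dist x' y) := iInf₂_le x' hx'
      exact h1.trans (iInf₂_le y' hy')
    constructor
    · intro hne
      have hbound : ∀ K : ℕ, 0 < K → Gam ℓ lam (Qcube d K)
          ≤ ((⌈(K:ℝ)/δ⌉₊ : ℝ)) ^ d
            * ((ellMinus d ℓ δ).toReal * phi (lam / (ellMinus d ℓ δ).toReal)) :=
        fun K _ => GlAux.Gam_le_of_c ℓ hδ (ellMinus d ℓ δ) hpos.ne' hne hcbox lam hlam K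
      have hB : 0 ≤ (ellMinus d ℓ δ).toReal * phi (lam / (ellMinus d ℓ δ).toReal) :=
        mul_nonneg ENNReal.toReal_nonneg
          (GlAux.phi_nonneg (div_nonneg hlam.le ENNReal.toReal_nonneg))
      have h3 := GlAux.gl_le_of_bounds ℓ hδ lam hB hbound
      rw [div_mul_eq_mul_div]
      exact h3
    · intro htop
      have hcbox' : ∀ x' y' : EuclideanSpace ℝ (Fin d),
          (∀ i, x' i ∈ Set.Icc (0:ℝ) δ) → (∀ i, y' i ∈ Set.Icc (0:ℝ) δ) →
          (⊤ : ℝ≥0∞) ≤ ℓ (dist x' y') := fun x' y' hx' hy' => htop ▸ hcbox x' y' hx' hy'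
      exact GlAux.gl_le_of_bounds ℓ hδ lam hlam.le
        (fun K _ => GlAux.Gam_le_top ℓ hδ hcbox' lam hlam.le K)
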